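/- Let A be an ordered semiring, let Rad(A) be the frame of radical ideals of A ordered by inclusion, and let pt(Rad(A)) be the set of frame homomorphisms Rad(A) → 2 (maps preserving arbitrary joins and finite meets into the two-element frame), topologized as a subspace of the product 2^{Rad(A)} of Sierpiński spaces. Let Spec(A) be the set of prime ideals of A, topologized as the subspace of 2^A via the embedding sending a prime ideal I to the map x ↦ (x ∉ I). Then the map sending a prime ideal I ∈ Spec(A) to the frame homomorphism J ↦ (J ⊈ I) is a homeomorphism from Spec(A) onto pt(Rad(A)). -/

import Mathlib

universe u v

section Defs

variable {A : Type u} [CommSemiring A] [Preorder A]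

/-- The set `⟨S⟩ = {z | ∃ m, ∃ s₁,…,s_m ∈ S, ∃ y₁,…,y_m, z ≤ s₁y₁ + ⋯ + s_m y_m}`,
the smallest ideal of the ordered semiring `A` containing `S`. -/
def span (S : Set A) : Set A :=
  {z : A | ∃ (m : ℕ) (s y : Fin m → A), (∀ i, s i ∈ S) ∧ z ≤ ∑ i, s i * y i}

/-- `I` is an ideal of the ordered semiring `A`: downward closed, contains `0`,
closed under addition, and absorbing under multiplication. -/
def IsIdeal (I : Set A) : Prop :=
  (∀ ⦃x y : A⦄, x ≤ y → y ∈ I → x ∈ I) ∧ (0 : A) ∈ I ∧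
    (∀ ⦃x y : A⦄, x ∈ I → y ∈ I → x + y ∈ I) ∧
    ∀ x y : A, x ∈ I ∨ y ∈ I → x * y ∈ I

/-- The product `I · J` of two ideals: the ideal generated by `{x * y | x ∈ I, y ∈ J}`. -/
def iprod (I J : Set A) : Set A := span (Set.image2 (· * ·) I J)

/-- The radical `√I = {x | ∃ n ≥ 1, x ^ n ∈ I}` of an ideal `I`. -/
def radical (I : Set A) : Set A := {x : A | ∃ n : ℕ, 1 ≤ n ∧ x ^ n ∈ I}

/-- `I` is a radical ideal of the ordered semiring `A`. -/
def IsRadicalIdeal (I : Set A) : Prop :=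
  IsIdeal I ∧ ∀ (x : A) (n : ℕ), 1 ≤ n → x ^ n ∈ I → x ∈ I

/-- `I` is a prime ideal of the ordered semiring `A`. -/
def IsPrimeIdeal (I : Set A) : Prop :=
  IsIdeal I ∧ (1 : A) ∉ I ∧ ∀ x y : A, x * y ∈ I → x ∈ I ∨ y ∈ I

/-- `I` is a maximal ideal of the ordered semiring `A`. -/
def IsMaximalIdeal (I : Set A) : Prop :=
  IsIdeal I ∧ I ≠ Set.univ ∧ ∀ J : Set A, IsIdeal J → I ⊆ J → J = I ∨ J = Set.univ

end Defs

/-- The spectrum of an ordered semiring: the set of its prime ideals. -/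
def PrimeSpec (A : Type u) [CommSemiring A] [Preorder A] : Type u :=
  {I : Set A // IsPrimeIdeal I}

/-- The prime ideal underlying a point of the spectrum. -/
def PrimeSpec.asIdeal {A : Type u} [CommSemiring A] [Preorder A] (I : PrimeSpec A) :
    Set A :=
  Subtype.val I

/-- The topology on `Spec A`: the subspace topology induced from the product `2 ^ A` of
Sierpiński spaces (`Prop` with its Sierpiński topology) via `I ↦ (x ↦ x ∉ I)`. -/
instance (A : Type u) [CommSemiring A] [Preorder A] : TopologicalSpace (PrimeSpec A) :=
  TopologicalSpace.induced (fun (I : PrimeSpec A) (x : A) => x ∉ I.asIdeal) inferInstance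

/-- The frame `Rad A` of radical ideals of `A`, ordered by inclusion. -/
abbrev RadIdl (A : Type u) [CommSemiring A] [Preorder A] : Type u :=
  {J : Set A // IsRadicalIdeal J}

/-- `p : Rad A → Prop` is a frame homomorphism into the two-element frame `2 = Prop`:
it preserves arbitrary joins (least upper bounds) and finite meets (binary greatest
lower bounds and the top element). -/
def IsFrameHomToTwo {A : Type u} [CommSemiring A] [Preorder A]
    (p : RadIdl A → Prop) : Prop :=
  (∀ (K : Set (RadIdl A)) (s : RadIdl A), IsLUB K s → (p s ↔ ∃ k ∈ K, p k)) ∧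
    (∀ a b m : RadIdl A, IsGLB {a, b} m → (p m ↔ p a ∧ p b)) ∧
    ∀ t : RadIdl A, IsTop t → p t

/-- The space `pt (Rad A)` of points of the frame of radical ideals: frame
homomorphisms `Rad A → 2`, topologized as a subspace of the product `2 ^ Rad A` of
Sierpiński spaces. -/
abbrev RadPt (A : Type u) [CommSemiring A] [Preorder A] : Type u :=
  {p : RadIdl A → Prop // IsFrameHomToTwo p}

set_option linter.unusedSectionVars false

section OSRHelpers
variable {A : Type u} [CommSemiring A] [Preorder A]
  [CovariantClass A A (· + ·) (· ≤ ·)] [CovariantClass A A (· * ·) (· ≤ ·)]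

lemma osr_mul_le_mul {a b c d : A} (h1 : a ≤ b) (h2 : c ≤ d) : a * c ≤ b * d := by
  calc a * c ≤ a * d := mul_le_mul_right h2 a
    _ = d * a := mul_comm _ _
    _ ≤ d * b := mul_le_mul_right h1 d
    _ = b * d := mul_comm _ _

lemma osr_add_le_add {a b c d : A} (h1 : a ≤ b) (h2 : c ≤ d) : a + c ≤ b + d := by
  calc a + c ≤ a + d := add_le_add_right h2 a
    _ = d + a := add_comm _ _
    _ ≤ d + b := add_le_add_right h1 d
    _ = b + d := add_comm _ _

lemma osr_pow_le_pow {a b : A} (h : a ≤ b) : ∀ n : ℕ, a ^ n ≤ b ^ n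
  | 0 => by simp
  | n + 1 => by
      rw [pow_succ, pow_succ]
      exact osr_mul_le_mul (osr_pow_le_pow h n) h

lemma IsIdeal.sum_mem {I : Set A} (hI : IsIdeal I) {ι : Type v} (s : Finset ι)
    (f : ι → A) (h : ∀ i ∈ s, f i ∈ I) : ∑ i ∈ s, f i ∈ I := by
  classical
  induction s using Finset.induction_on with
  | empty => simpa using hI.2.1
  | insert _ _ hni ih =>
      rw [Finset.sum_insert hni]
      exact hI.2.2.1 (h _ (Finset.mem_insert_self _ _))
        (ih fun i hi => h i (Finset.mem_insert_of_mem hi))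

lemma subset_span (S : Set A) : S ⊆ span S := by
  intro x hx
  exact ⟨1, fun _ => x, fun _ => 1, fun _ => hx, by simp⟩

lemma span_isIdeal (S : Set A) : IsIdeal (span S) := by
  refine ⟨?_, ?_, ?_, ?_⟩
  · rintro x y hxy ⟨m, s, t, hs, hy⟩
    exact ⟨m, s, t, hs, le_trans hxy hy⟩
  · exact ⟨0, ![], ![], by simp, by simp⟩
  · rintro x y ⟨m, s, t, hs, hx⟩ ⟨m', s', t', hs', hy⟩
    refine ⟨m + m', Fin.append s s', Fin.append t t', ?_, ?_⟩
    · intro i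
      refine Fin.addCases (fun j => ?_) (fun j => ?_) i
      · rw [Fin.append_left]; exact hs j
      · rw [Fin.append_right]; exact hs' j
    · rw [Fin.sum_univ_add]
      simp only [Fin.append_left, Fin.append_right]
      exact osr_add_le_add hx hy
  · rintro x y (⟨m, s, t, hs, hx⟩ | ⟨m, s, t, hs, hy⟩)
    · refine ⟨m, s, fun i => t i * y, hs, ?_⟩
      calc x * y = y * x := mul_comm _ _
        _ ≤ y * ∑ i, s i * t i := mul_le_mul_right hx y
        _ = ∑ i, s i * (t i * y) := by
            rw [Finset.mul_sum]; exact Finset.sum_congr rfl fun i _ => by ring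
    · refine ⟨m, s, fun i => t i * x, hs, ?_⟩
      calc x * y ≤ x * ∑ i, s i * t i := mul_le_mul_right hy x
        _ = ∑ i, s i * (t i * x) := by
            rw [Finset.mul_sum]; exact Finset.sum_congr rfl fun i _ => by ring

lemma span_subset {S I : Set A} (hI : IsIdeal I) (h : S ⊆ I) : span S ⊆ I := by
  rintro z ⟨m, s, t, hs, hz⟩
  exact hI.1 hz (hI.sum_mem _ _ fun i _ => hI.2.2.2 _ _ (Or.inl (h (hs i))))

lemma subset_radical (I : Set A) : I ⊆ radical I := fun x hx => ⟨1, le_refl _, by simpa⟩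

lemma radical_isRadicalIdeal {I : Set A} (hI : IsIdeal I) : IsRadicalIdeal (radical I) := by
  refine ⟨⟨?_, ?_, ?_, ?_⟩, ?_⟩
  · rintro x y hxy ⟨n, hn, hy⟩
    exact ⟨n, hn, hI.1 (osr_pow_le_pow hxy n) hy⟩
  · exact ⟨1, le_refl _, by simpa using hI.2.1⟩
  · rintro x y ⟨n, hn, hx⟩ ⟨m, hm, hy⟩
    refine ⟨n + m, le_trans hn (Nat.le_add_right _ _), ?_⟩
    rw [add_pow]
    refine hI.sum_mem _ _ fun k hk => ?_
    rcases le_or_gt n k with h | h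
    · have : x ^ k = x ^ n * x ^ (k - n) := by rw [← pow_add, Nat.add_sub_cancel' h]
      rw [this, mul_assoc, mul_assoc]
      exact hI.2.2.2 _ _ (Or.inl hx)
    · have hk2 : m ≤ n + m - k := by omega
      have : y ^ (n + m - k) = y ^ m * y ^ (n + m - k - m) := by
        rw [← pow_add, Nat.add_sub_cancel' hk2]
      rw [this, mul_comm (x ^ k), mul_assoc, mul_assoc]
      exact hI.2.2.2 _ _ (Or.inl hy)
  · rintro x y (⟨n, hn, hx⟩ | ⟨n, hn, hy⟩)
    · exact ⟨n, hn, by rw [mul_pow]; exact hI.2.2.2 _ _ (Or.inl hx)⟩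
    · exact ⟨n, hn, by rw [mul_pow]; exact hI.2.2.2 _ _ (Or.inr hy)⟩
  · rintro x n hn ⟨m, hm, hx⟩
    exact ⟨n * m, Nat.one_le_iff_ne_zero.mpr (by positivity), by rwa [pow_mul]⟩

lemma radical_subset {J I : Set A} (hI : IsRadicalIdeal I) (h : J ⊆ I) :
    radical J ⊆ I := by
  rintro x ⟨n, hn, hx⟩
  exact hI.2 x n hn (h hx)

/-- The radical ideal generated by a single element. -/
def rad1 (x : A) : Set A := radical (span {x})

lemma mem_span_singleton {x z : A} : z ∈ span ({x} : Set A) ↔ ∃ a, z ≤ x * a := by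
  constructor
  · rintro ⟨m, s, t, hs, hz⟩
    refine ⟨∑ i, t i, ?_⟩
    rw [Finset.mul_sum]
    calc z ≤ ∑ i, s i * t i := hz
      _ = ∑ i, x * t i := Finset.sum_congr rfl fun i _ => by rw [hs i]
  · rintro ⟨a, ha⟩
    exact ⟨1, fun _ => x, fun _ => a, fun _ => rfl, by simpa⟩

lemma rad1_isRadicalIdeal (x : A) : IsRadicalIdeal (rad1 x) :=
  radical_isRadicalIdeal (span_isIdeal _)

lemma mem_rad1_self (x : A) : x ∈ rad1 x :=
  subset_radical _ (subset_span _ rfl)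

lemma rad1_subset_iff {J : Set A} (hJ : IsRadicalIdeal J) {x : A} :
    rad1 x ⊆ J ↔ x ∈ J := by
  constructor
  · intro h; exact h (mem_rad1_self x)
  · intro hx
    exact radical_subset hJ (span_subset hJ.1 (by simpa using hx))

lemma isRadicalIdeal_univ : IsRadicalIdeal (Set.univ : Set A) :=
  ⟨⟨fun _ _ _ _ => trivial, trivial, fun _ _ _ _ => trivial, fun _ _ _ => trivial⟩,
    fun _ _ _ _ => trivial⟩

lemma isRadicalIdeal_inter {I J : Set A} (hI : IsRadicalIdeal I) (hJ : IsRadicalIdeal J) :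
    IsRadicalIdeal (I ∩ J) := by
  refine ⟨⟨?_, ⟨hI.1.2.1, hJ.1.2.1⟩, ?_, ?_⟩, ?_⟩
  · rintro x y hxy ⟨h1, h2⟩; exact ⟨hI.1.1 hxy h1, hJ.1.1 hxy h2⟩
  · rintro x y ⟨h1, h2⟩ ⟨h3, h4⟩; exact ⟨hI.1.2.2.1 h1 h3, hJ.1.2.2.1 h2 h4⟩
  · rintro x y (⟨h1, h2⟩ | ⟨h1, h2⟩)
    · exact ⟨hI.1.2.2.2 _ _ (Or.inl h1), hJ.1.2.2.2 _ _ (Or.inl h2)⟩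
    · exact ⟨hI.1.2.2.2 _ _ (Or.inr h1), hJ.1.2.2.2 _ _ (Or.inr h2)⟩
  · rintro x n hn ⟨h1, h2⟩; exact ⟨hI.2 x n hn h1, hJ.2 x n hn h2⟩

lemma IsPrimeIdeal.isRadical {I : Set A} (hI : IsPrimeIdeal I) : IsRadicalIdeal I := by
  refine ⟨hI.1, fun x n => ?_⟩
  induction n with
  | zero => omega
  | succ n ih =>
      intro _ hx
      rcases Nat.eq_zero_or_pos n with h | h
      · subst h; simpa using hx
      · rw [pow_succ] at hx
        rcases hI.2.2 _ _ hx with h' | h'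
        · exact ih h h'
        · exact h'

lemma mem_rad1_mul_left (x y : A) : x * y ∈ rad1 x :=
  subset_radical _ (mem_span_singleton.mpr ⟨y, le_refl _⟩)

lemma inter_rad1_subset (x y : A) : rad1 x ∩ rad1 y ⊆ rad1 (x * y) := by
  rintro z ⟨⟨n, hn, hxz⟩, ⟨m, hm, hyz⟩⟩
  rcases mem_span_singleton.mp hxz with ⟨a, ha⟩
  rcases mem_span_singleton.mp hyz with ⟨b, hb⟩
  refine ⟨n + m, le_trans hn (Nat.le_add_right _ _), mem_span_singleton.mpr ⟨a * b, ?_⟩⟩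
  calc z ^ (n + m) = z ^ n * z ^ m := pow_add z n m
    _ ≤ (x * a) * (y * b) := osr_mul_le_mul ha hb
    _ = x * y * (a * b) := by ring

end OSRHelpers

section FrameHelpers
variable {A : Type u} [CommSemiring A] [Preorder A]
  [CovariantClass A A (· + ·) (· ≤ ·)] [CovariantClass A A (· * ·) (· ≤ ·)]

lemma radIdl_le_iff {a b : RadIdl A} : a ≤ b ↔ a.val ⊆ b.val := Iff.rfl

/-- `rad1 x` as an element of `RadIdl A`. -/
def radPtGen (x : A) : RadIdl A := ⟨rad1 x, rad1_isRadicalIdeal x⟩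

lemma prime_frameHom (I : PrimeSpec A) :
    IsFrameHomToTwo (fun J : RadIdl A => ¬ J.val ⊆ I.asIdeal) := by
  have hIp : IsPrimeIdeal I.asIdeal := Subtype.prop I
  have hIr : IsRadicalIdeal I.asIdeal := hIp.isRadical
  refine ⟨?_, ?_, ?_⟩
  · intro K s hs
    constructor
    · intro hsI
      by_contra hc
      push_neg at hc
      apply hsI
      set U : RadIdl A :=
        ⟨radical (span (⋃ k ∈ K, k.val)),
          radical_isRadicalIdeal (span_isIdeal _)⟩ with hU
      have hub : U ∈ upperBounds K := by
        intro k hk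
        refine radIdl_le_iff.mpr ?_
        intro z hz
        exact subset_radical _ (subset_span _ (Set.mem_biUnion hk hz))
      have hsU : s ≤ U := hs.2 hub
      have hUI : U.val ⊆ I.asIdeal := by
        refine radical_subset hIr (span_subset hIr.1 ?_)
        exact Set.iUnion₂_subset fun k hk => hc k hk
      exact fun z hz => hUI (hsU hz)
    · rintro ⟨k, hk, hkI⟩
      intro hsub
      exact hkI fun z hz => hsub (hs.1 hk hz)
  · intro a b m hm
    have hma : m ≤ a := hm.1 (Set.mem_insert _ _)
    have hmb : m ≤ b := hm.1 (Set.mem_insert_of_mem _ rfl)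
    have hab : a.val ∩ b.val ⊆ m.val := by
      have hn : (⟨a.val ∩ b.val, isRadicalIdeal_inter a.2 b.2⟩ : RadIdl A)
          ∈ lowerBounds ({a, b} : Set (RadIdl A)) := by
        rintro k (rfl | h)
        · exact Set.inter_subset_left
        · simp only [Set.mem_singleton_iff] at h
          subst h
          exact Set.inter_subset_right
      exact radIdl_le_iff.mp (hm.2 hn)
    constructor
    · intro hmI
      constructor
      · intro h; exact hmI fun z hz => h (hma hz)
      · intro h; exact hmI fun z hz => h (hmb hz)
    · rintro ⟨ha, hb⟩
      rcases Set.not_subset.mp ha with ⟨x, hxa, hxI⟩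
      rcases Set.not_subset.mp hb with ⟨y, hyb, hyI⟩
      intro hmI
      have hxyab : x * y ∈ a.val ∩ b.val :=
        ⟨a.2.1.2.2.2 _ _ (Or.inl hxa), b.2.1.2.2.2 _ _ (Or.inr hyb)⟩
      have : x * y ∈ I.asIdeal := hmI (hab hxyab)
      rcases hIp.2.2 _ _ this with h | h
      · exact hxI h
      · exact hyI h
  · intro t ht
    have : (⟨Set.univ, isRadicalIdeal_univ⟩ : RadIdl A) ≤ t := ht _
    intro hsub
    exact hIp.2.1 (hsub (this (Set.mem_univ 1)))

lemma pt_mono (p : RadPt A) {a b : RadIdl A} (h : a ≤ b) : p.val a → p.val b := by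
  have hglb : IsGLB ({a, b} : Set (RadIdl A)) a := by
    constructor
    · rintro k (rfl | hk)
      · exact le_refl _
      · simp only [Set.mem_singleton_iff] at hk; subst hk; exact h
    · intro u hu
      exact hu (Set.mem_insert _ _)
  intro hpa
  exact ((p.2.2.1 a b a hglb).mp hpa).2

lemma pt_lub (p : RadPt A) (J : RadIdl A) :
    p.val J ↔ ∃ x ∈ J.val, p.val (radPtGen x) := by
  have hlub : IsLUB (radPtGen '' J.val) J := by
    constructor
    · rintro k ⟨x, hx, rfl⟩
      exact radIdl_le_iff.mpr ((rad1_subset_iff J.2).mpr hx)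
    · intro u hu
      intro x hx
      exact hu ⟨x, hx, rfl⟩ (mem_rad1_self x)
  rw [p.2.1 _ J hlub]
  constructor
  · rintro ⟨k, ⟨x, hx, rfl⟩, hpk⟩; exact ⟨x, hx, hpk⟩
  · rintro ⟨x, hx, hpx⟩; exact ⟨radPtGen x, ⟨x, hx, rfl⟩, hpx⟩

lemma pt_primeIdeal (p : RadPt A) :
    IsPrimeIdeal {x : A | ¬ p.val (radPtGen x)} := by
  refine ⟨⟨?_, ?_, ?_, ?_⟩, ?_, ?_⟩
  · intro x y hxy hy
    intro hpx
    apply hy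
    refine pt_mono p ?_ hpx
    refine radIdl_le_iff.mpr ((rad1_subset_iff (rad1_isRadicalIdeal y)).mpr ?_)
    exact subset_radical _ (mem_span_singleton.mpr ⟨1, by simpa using hxy⟩)
  · -- 0
    intro hp0
    have hlub : IsLUB (∅ : Set (RadIdl A)) (radPtGen 0) := by
      constructor
      · rintro k ⟨⟩
      · intro u _
        refine radIdl_le_iff.mpr ((rad1_subset_iff u.2).mpr ?_)
        exact u.2.1.2.1
    rcases (p.2.1 ∅ _ hlub).mp hp0 with ⟨k, hk, _⟩
    exact hk
  · -- add
    intro x y hx hy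
    intro hpxy
    set s2 : RadIdl A :=
      ⟨radical (span {x, y}), radical_isRadicalIdeal (span_isIdeal _)⟩ with hs2
    have hlub : IsLUB ({radPtGen x, radPtGen y} : Set (RadIdl A)) s2 := by
      constructor
      · rintro k (rfl | hk)
        · refine radIdl_le_iff.mpr ((rad1_subset_iff s2.2).mpr ?_)
          exact subset_radical _ (subset_span _ (by simp))
        · simp only [Set.mem_singleton_iff] at hk; subst hk
          refine radIdl_le_iff.mpr ((rad1_subset_iff s2.2).mpr ?_)
          exact subset_radical _ (subset_span _ (by simp))
      · intro u hu
        have hxu : x ∈ u.val :=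
          (rad1_subset_iff u.2).mp (hu (Set.mem_insert _ _))
        have hyu : y ∈ u.val :=
          (rad1_subset_iff u.2).mp (hu (Set.mem_insert_of_mem _ rfl))
        refine radIdl_le_iff.mpr (radical_subset u.2 (span_subset u.2.1 ?_))
        intro z hz
        rcases hz with rfl | hz
        · exact hxu
        · simp only [Set.mem_singleton_iff] at hz; subst hz; exact hyu
    have hle : radPtGen (x + y) ≤ s2 := by
      refine radIdl_le_iff.mpr ((rad1_subset_iff s2.2).mpr ?_)
      refine subset_radical _ ((span_isIdeal _).2.2.1 ?_ ?_)
      · exact subset_span _ (by simp)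
      · exact subset_span _ (by simp)
    have := (p.2.1 _ s2 hlub).mp (pt_mono p hle hpxy)
    rcases this with ⟨k, hk, hpk⟩
    rcases hk with rfl | hk
    · exact hx hpk
    · simp only [Set.mem_singleton_iff] at hk; subst hk; exact hy hpk
  · -- absorbing
    intro x y h
    rcases h with hx | hy
    · intro hpxy
      apply hx
      refine pt_mono p ?_ hpxy
      exact radIdl_le_iff.mpr
        ((rad1_subset_iff (rad1_isRadicalIdeal x)).mpr (mem_rad1_mul_left x y))
    · intro hpxy
      apply hy
      refine pt_mono p ?_ hpxy
      refine radIdl_le_iff.mpr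
        ((rad1_subset_iff (rad1_isRadicalIdeal y)).mpr ?_)
      rw [mul_comm]
      exact mem_rad1_mul_left y x
  · -- 1 ∉
    intro h1
    apply h1
    refine p.2.2.2 _ ?_
    intro u
    refine radIdl_le_iff.mpr fun z _ => ?_
    exact subset_radical _ (mem_span_singleton.mpr ⟨z, by simp⟩)
  · -- prime
    intro x y hxy
    by_contra hc
    push_neg at hc
    simp only [Set.mem_setOf_eq, not_not] at hc
    apply hxy
    set m : RadIdl A :=
      ⟨rad1 x ∩ rad1 y,
        isRadicalIdeal_inter (rad1_isRadicalIdeal x) (rad1_isRadicalIdeal y)⟩ with hm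
    have hglb : IsGLB ({radPtGen x, radPtGen y} : Set (RadIdl A)) m := by
      constructor
      · rintro k (rfl | hk)
        · exact Set.inter_subset_left
        · simp only [Set.mem_singleton_iff] at hk; subst hk
          exact Set.inter_subset_right
      · intro u hu
        have h1 : u ≤ radPtGen x := hu (Set.mem_insert _ _)
        have h2 : u ≤ radPtGen y := hu (Set.mem_insert_of_mem _ rfl)
        exact Set.subset_inter h1 h2
    have hpm : p.val m := (p.2.2.1 _ _ _ hglb).mpr ⟨hc.1, hc.2⟩
    exact pt_mono p (radIdl_le_iff.mpr (inter_rad1_subset x y)) hpm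

end FrameHelpers

/-- the map sending a prime ideal `I ∈ Spec A` to the frame
homomorphism `J ↦ (J ⊈ I)` is a homeomorphism `Spec A ≅ pt (Rad A)`. -/
theorem stmt18 {A : Type u} [CommSemiring A] [Preorder A]
    [CovariantClass A A (· + ·) (· ≤ ·)] [CovariantClass A A (· * ·) (· ≤ ·)] :
    ∃ h : PrimeSpec A ≃ₜ RadPt A,
      ∀ (I : PrimeSpec A) (J : RadIdl A), (h I).val J ↔ ¬J.val ⊆ I.asIdeal := by
  classical
  let toFun : PrimeSpec A → RadPt A :=
    fun I => ⟨fun J => ¬ J.val ⊆ I.asIdeal, prime_frameHom I⟩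
  let invFun : RadPt A → PrimeSpec A :=
    fun p => ⟨{x : A | ¬ p.val (radPtGen x)}, pt_primeIdeal p⟩
  have left_inv : Function.LeftInverse invFun toFun := by
    intro I
    apply Subtype.ext
    ext x
    show ¬¬ ((radPtGen x).val ⊆ I.asIdeal) ↔ x ∈ Subtype.val I
    rw [not_not]
    exact rad1_subset_iff (Subtype.prop I : IsPrimeIdeal I.asIdeal).isRadical
  have right_inv : Function.RightInverse invFun toFun := by
    intro p
    apply Subtype.ext
    funext J
    show (¬ J.val ⊆ {x : A | ¬ p.val (radPtGen x)}) = p.val J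
    apply propext
    rw [Set.not_subset, pt_lub p J]
    constructor
    · rintro ⟨x, hx, hpx⟩
      simp only [Set.mem_setOf_eq, not_not] at hpx
      exact ⟨x, hx, hpx⟩
    · rintro ⟨x, hx, hpx⟩
      exact ⟨x, hx, by simpa using hpx⟩
  have cont_to : Continuous toFun := by
    refine Continuous.subtype_mk ?_ _
    refine continuous_pi fun J => ?_
    rw [continuous_Prop]
    have : {I : PrimeSpec A | ¬ J.val ⊆ I.asIdeal}
        = ⋃ x ∈ J.val, {I : PrimeSpec A | x ∉ I.asIdeal} := by
      ext I
      simp [Set.not_subset]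
    rw [this]
    refine isOpen_biUnion fun x _ => ?_
    have hdom : Continuous (fun (I : PrimeSpec A) (x : A) => x ∉ I.asIdeal) :=
      continuous_induced_dom
    exact continuous_Prop.mp ((continuous_apply x).comp hdom)
  have cont_inv : Continuous invFun := by
    refine continuous_induced_rng.mpr ?_
    have : ((fun (I : PrimeSpec A) (x : A) => x ∉ I.asIdeal) ∘ invFun)
        = fun (p : RadPt A) (x : A) => p.val (radPtGen x) := by
      funext p x
      simp only [Function.comp_apply, invFun]
      show (¬¬ p.val (radPtGen x)) = p.val (radPtGen x)
      rw [not_not]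
    rw [this]
    exact continuous_pi fun x => (continuous_apply (radPtGen x)).comp continuous_subtype_val
  exact ⟨⟨⟨toFun, invFun, left_inv, right_inv⟩, cont_to, cont_inv⟩, fun I J => Iff.rfl⟩
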